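/- arXiv:1110.6523 — 9 statements merged into one kernel-verified Lean document; each statement's English description precedes it below -/
import Mathlib

section
/- Let C be a small category and D a cocomplete category. Then precomposition with the Yoneda embedding y : C → Psh(C) induces an equivalence of categories between the full subcategory of the functor category Psh(C) ⥤ D spanned by the colimit-preserving functors and the functor category C ⥤ D. (In particular, every functor C → D extends, uniquely up to isomorphism, to a colimit-preserving functor Psh(C) → D.) -/
/-!
A colimit-preserving functor `F : Psh(C) ⥤ D` is the left Kan extension of its restriction
`y ⋙ F` along the Yoneda embedding (every presheaf is a colimit of representables), so
restriction along `y` is fully faithful on such functors. It is essentially surjective because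
the Yoneda extension `Lan_y A` of any `A : C ⥤ D` preserves colimits and restricts back to `A`.
-/

open CategoryTheory CategoryTheory.Limits

universe u u₂

namespace CategoryTheory.ObjectProperty

open _root_.CategoryTheory.Functor

variable {C E D : Type*} [Category C] [Category E] [Category D]
variable (L : C ⥤ E) {P : ObjectProperty (E ⥤ D)}

noncomputable def fullyFaithfulιCompWhiskeringLeftOfIsLeftKanExtension
    (hP : ∀ F, P F → F.IsLeftKanExtension (𝟙 (L ⋙ F))) :
    (P.ι ⋙ (whiskeringLeft C E D).obj L).FullyFaithful where
  preimage {F G} f :=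
    haveI := hP _ F.property
    homMk (F.obj.descOfIsLeftKanExtension (𝟙 _) G.obj f)
  map_preimage {F G} f := by
    have := hP _ F.property
    exact (Category.id_comp _).symm.trans (F.obj.descOfIsLeftKanExtension_fac (𝟙 _) G.obj f)
  preimage_map {F G} f := by
    have := hP _ F.property
    ext1
    apply F.obj.hom_ext_of_isLeftKanExtension (𝟙 (L ⋙ F.obj))
    exact (F.obj.descOfIsLeftKanExtension_fac _ G.obj _).trans (Category.id_comp _).symm

theorem isEquivalence_ι_comp_whiskeringLeft_of_isLeftKanExtension
    (hP : ∀ F, P F → F.IsLeftKanExtension (𝟙 (L ⋙ F)))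
    (hL : ∀ A : C ⥤ D, ∃ F, P F ∧ Nonempty (L ⋙ F ≅ A)) :
    (P.ι ⋙ (whiskeringLeft C E D).obj L).IsEquivalence :=
  have := (fullyFaithfulιCompWhiskeringLeftOfIsLeftKanExtension L hP).full
  have := (fullyFaithfulιCompWhiskeringLeftOfIsLeftKanExtension L hP).faithful
  have : EssSurj (P.ι ⋙ (whiskeringLeft C E D).obj L) := ⟨fun A => by
    obtain ⟨F, hF, ⟨e⟩⟩ := hL A
    exact ⟨⟨F, hF⟩, ⟨e⟩⟩⟩
  { }

end CategoryTheory.ObjectProperty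

/-- For a small category `C` and a cocomplete category `D`, precomposition with the Yoneda
embedding `y : C ⥤ Psh(C)` induces an equivalence between the full subcategory of
`Psh(C) ⥤ D` spanned by the colimit-preserving functors and the functor category `C ⥤ D`. -/
theorem stmt_0 (C : Type u) [SmallCategory C] (D : Type u₂) [Category.{u} D]
    [HasColimits D] :
    (ObjectProperty.ι
        (fun F : (Cᵒᵖ ⥤ Type u) ⥤ D => Nonempty (PreservesColimitsOfSize.{u, u} F)) ⋙
      (Functor.whiskeringLeft C (Cᵒᵖ ⥤ Type u) D).obj yoneda).IsEquivalence := by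
  -- Mathlib's Yoneda-extension API is stated for `uliftYoneda`, which is isomorphic to `yoneda`.
  have : (ObjectProperty.ι
        (fun F : (Cᵒᵖ ⥤ Type u) ⥤ D => Nonempty (PreservesColimitsOfSize.{u, u} F)) ⋙
      (Functor.whiskeringLeft C (Cᵒᵖ ⥤ Type u) D).obj uliftYoneda.{u}).IsEquivalence :=
    ObjectProperty.isEquivalence_ι_comp_whiskeringLeft_of_isLeftKanExtension _
      (fun _ ⟨_⟩ => inferInstance)
      (fun A => ⟨_, ⟨inferInstance⟩, ⟨Presheaf.isExtensionAlongULiftYoneda A⟩⟩)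
  exact Functor.isEquivalence_of_iso
    (Functor.isoWhiskerLeft _ ((Functor.whiskeringLeft _ _ D).mapIso uliftYonedaIsoYoneda))
end

section
/- Let R be a commutative ring and let M and N be R-modules such that there is an R-module isomorphism N ⊗[R] M ≅ R. Then M is a finitely generated R-module. -/
open scoped TensorProduct

/-- If `R` is a commutative ring and `M`, `N` are `R`-modules with `N ⊗[R] M ≅ R`,
then `M` is a finitely generated `R`-module. -/
theorem stmt_1 (R : Type*) [CommRing R] (M N : Type*)
    [AddCommGroup M] [Module R M] [AddCommGroup N] [Module R N]
    (e : N ⊗[R] M ≃ₗ[R] R) : Module.Finite R M := by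
  classical
  obtain ⟨S, hS⟩ := TensorProduct.exists_finset (e.symm 1)
  -- the isomorphism M ≅ M sending m to ∑ e(nᵢ ⊗ m) • mᵢ
  let c : M ≃ₗ[R] M :=
    (TensorProduct.lid R M).symm ≪≫ₗ (LinearEquiv.rTensor M e.symm) ≪≫ₗ
      (TensorProduct.assoc R N M M) ≪≫ₗ
      (LinearEquiv.lTensor N (TensorProduct.comm R M M)) ≪≫ₗ
      (TensorProduct.assoc R N M M).symm ≪≫ₗ (LinearEquiv.rTensor M e) ≪≫ₗ
      TensorProduct.lid R M
  have hc : ∀ m : M, c m = ∑ p ∈ S, e (p.1 ⊗ₜ[R] m) • p.2 := by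
    intro m
    have h1 : (LinearEquiv.rTensor M e.symm) ((1 : R) ⊗ₜ[R] m)
        = ∑ p ∈ S, (p.1 ⊗ₜ[R] p.2) ⊗ₜ[R] m := by
      simp only [LinearEquiv.rTensor, TensorProduct.congr_tmul, LinearEquiv.refl_apply]
      rw [hS, TensorProduct.sum_tmul]
    simp only [c, LinearEquiv.trans_apply, TensorProduct.lid_symm_apply, h1, map_sum]
    simp [LinearEquiv.rTensor, TensorProduct.smul_tmul']
  refine ⟨⟨S.image Prod.snd, ?_⟩⟩
  rw [eq_top_iff]
  intro m _
  have : m = c (c.symm m) := (c.apply_symm_apply m).symm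
  rw [this, hc]
  exact Submodule.sum_mem _ fun p hp => Submodule.smul_mem _ _
    (Submodule.subset_span (Finset.mem_coe.2 (Finset.mem_image_of_mem Prod.snd hp)))
end

section
/- Let R be a commutative ring and let M and N be R-modules such that there is an R-module isomorphism N ⊗[R] M ≅ R. Then M is a finitely generated projective R-module, and for every prime ideal p of R the localization M_p is a free R_p-module of rank 1, i.e. M_p ≅ R_p as R_p-modules. -/
open scoped TensorProduct

/-- If `R` is a commutative ring and `M`, `N` are `R`-modules with `N ⊗[R] M ≅ R`, then `M` is a
finitely generated projective `R`-module and for every prime ideal `p` of `R` the localization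
`M_p` is free of rank `1` over `R_p`, i.e. `M_p ≅ R_p`. -/
theorem stmt_2 (R : Type*) [CommRing R] (M N : Type*)
    [AddCommGroup M] [Module R M] [AddCommGroup N] [Module R N]
    (e : N ⊗[R] M ≃ₗ[R] R) :
    Module.Finite R M ∧ Module.Projective R M ∧
      ∀ (p : Ideal R) [p.IsPrime],
        Nonempty (LocalizedModule p.primeCompl M ≃ₗ[Localization.AtPrime p]
          Localization.AtPrime p) := by
  have : Module.Invertible R M := .right e
  refine ⟨inferInstance, inferInstance, fun p _ => ?_⟩
  -- `M_p` is invertible over the local ring `R_p`, whose Picard group is trivial, so `M_p` is free.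
  exact Module.Invertible.free_iff_linearEquiv.mp inferInstance
end

section
/- Let S be a commutative ring, n ≥ 0, and let s₀, …, sₙ ∈ S be elements generating the unit ideal (the ideal span of {s₀,…,sₙ} is all of S). Consider the S-linear maps g : S^(pairs (i,j) with 0 ≤ i < j ≤ n) → S^(n+1) defined by g(e_{i,j}) = s_i · e_j − s_j · e_i, and f : S^(n+1) → S defined by f(e_i) = s_i. Then f is surjective and the kernel of f equals the image of g. -/
/-- Let `S` be a commutative ring and `s₀, …, sₙ ∈ S` generating the unit ideal. Let
`g : S^{(i,j) : i < j} → S^{n+1}`, `e_{i,j} ↦ s_i • e_j - s_j • e_i` and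
`f : S^{n+1} → S`, `e_i ↦ s_i`. Then `f` is surjective and `ker f = im g`, i.e. the sequence
`S^{C(n+1,2)} → S^{n+1} → S → 0` is exact. -/
theorem stmt_4 (S : Type*) [CommRing S] (n : ℕ) (s : Fin (n + 1) → S) (hs : Ideal.span (Set.range s) = ⊤)
    (f : (Fin (n + 1) →₀ S) →ₗ[S] S)
    (g : ({p : Fin (n + 1) × Fin (n + 1) // p.1 < p.2} →₀ S) →ₗ[S] (Fin (n + 1) →₀ S))
    (hf : ∀ i : Fin (n + 1), f (Finsupp.single i 1) = s i)
    (hg : ∀ q : {p : Fin (n + 1) × Fin (n + 1) // p.1 < p.2},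
      g (Finsupp.single q 1) =
        s q.1.1 • Finsupp.single q.1.2 (1 : S) - s q.1.2 • Finsupp.single q.1.1 (1 : S)) :
    Function.Surjective f ∧ LinearMap.ker f = LinearMap.range g := by
  classical
  have hdec : ∀ x : Fin (n + 1) →₀ S, x = ∑ i, (x i) • Finsupp.single i (1 : S) := by
    intro x
    ext k
    simp [Finsupp.finset_sum_apply, Finsupp.single_apply]
  have hfx : ∀ x : Fin (n + 1) →₀ S, f x = ∑ i, x i * s i := by
    intro x
    have h := congrArg f (hdec x)
    rw [map_sum] at h
    simp only [map_smul, hf, smul_eq_mul] at h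
    exact h
  have h1 : (1 : S) ∈ Ideal.span (Set.range s) := by rw [hs]; trivial
  rw [Ideal.span, Finsupp.mem_span_range_iff_exists_finsupp] at h1
  obtain ⟨c, hc⟩ := h1
  have hc' : ∑ i, c i * s i = 1 := by
    rw [← hc, Finsupp.sum_fintype]
    · simp [smul_eq_mul]
    · intro i; simp
  have hm : ∀ i j : Fin (n + 1),
      (s i • Finsupp.single j (1 : S) - s j • Finsupp.single i (1 : S)) ∈ LinearMap.range g := by
    intro i j
    rcases lt_trichotomy i j with h | h | h
    · exact ⟨Finsupp.single ⟨(i, j), h⟩ 1, (hg ⟨(i, j), h⟩)⟩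
    · subst h; simp
    · refine ⟨-Finsupp.single ⟨(j, i), h⟩ 1, ?_⟩
      rw [map_neg, hg ⟨(j, i), h⟩]
      abel
  constructor
  · intro y
    refine ⟨∑ i, (y * c i) • Finsupp.single i (1 : S), ?_⟩
    simp only [map_sum, map_smul, hf, smul_eq_mul]
    simp only [mul_assoc]
    rw [← Finset.mul_sum, hc', mul_one]
  · ext x
    simp only [LinearMap.mem_ker, LinearMap.mem_range]
    constructor
    · intro hx0
      have hx : ∑ j, x j * s j = 0 := by rw [← hfx x, hx0]
      have expand : ∀ i j : Fin (n + 1), (c i * x j) •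
          (s i • Finsupp.single j (1 : S) - s j • Finsupp.single i (1 : S))
          = ((c i * s i) * x j) • Finsupp.single j (1 : S)
            - (c i * (x j * s j)) • Finsupp.single i (1 : S) := by
        intro i j
        rw [smul_sub, smul_smul, smul_smul]
        ring_nf
      have key : x = ∑ i, ∑ j, (c i * x j) •
          (s i • Finsupp.single j (1 : S) - s j • Finsupp.single i (1 : S)) := by
        have first : ∑ i, ∑ j, ((c i * s i) * x j) • Finsupp.single j (1 : S) = x := by
          rw [Finset.sum_comm]
          rw [Finset.sum_congr rfl fun j _ => by
            rw [← Finset.sum_smul, ← Finset.sum_mul, hc', one_mul]]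
          exact (hdec x).symm
        have second : ∑ i, ∑ j, (c i * (x j * s j)) • Finsupp.single i (1 : S) = 0 := by
          rw [Finset.sum_congr rfl fun i _ => by
            rw [← Finset.sum_smul, ← Finset.mul_sum, hx, mul_zero]]
          simp
        simp only [expand, Finset.sum_sub_distrib, first, second, sub_zero]
      rw [key]
      exact Submodule.sum_mem _ fun i _ => Submodule.sum_mem _ fun j _ =>
        Submodule.smul_mem _ _ (hm i j)
    · rintro ⟨y, rfl⟩
      have hfg : ∀ q, f (g (Finsupp.single q (1 : S))) = 0 := by
        intro q
        rw [hg q]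
        simp only [map_sub, map_smul, hf, smul_eq_mul]
        ring
      have hdec2 : y = ∑ q, (y q) • Finsupp.single q (1 : S) := by
        ext k
        simp [Finsupp.finset_sum_apply, Finsupp.single_apply]
      have h2 : f (g y) = ∑ q, (y q) • f (g (Finsupp.single q (1 : S))) := by
        conv_lhs => rw [hdec2]
        rw [map_sum, map_sum]
        simp only [map_smul]
      rw [h2]
      simp [hfg]
end

section
/- Let R be a commutative ring, n ≥ 0, S = R[x₀,…,xₙ] the polynomial ring in n+1 variables, and k ≥ 1. Let D_k denote the set of exponent vectors d : {0,…,n} → ℕ with Σ_i d(i) = k, so that the monomials x^d for d ∈ D_k are exactly the monic monomials of degree k. Consider the S-linear map f : S^(D_k) → S defined on basis vectors by f(e_d) = x^d, and the S-linear map g : S^(D_{k−1} × {(i,j) : 0 ≤ i < j ≤ n}) → S^(D_k) defined by g(e_{q,i,j}) = x_i · e_{q+δ_j} − x_j · e_{q+δ_i}, where δ_i is the exponent vector of x_i. Then the image of f is the ideal of S generated by the monomials of degree k, and the kernel of f equals the image of g. -/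
/-! Modulo the relations `x_i e_{q+δ_j} - x_j e_{q+δ_i}` a factor `x_i` can be moved between the
coefficient and the index of a basis vector, so the class of `x^a e_d` only depends on `a + d`:
two factorizations `a + d = b + d'` are joined by a chain of such exchanges, each lowering
`∑ (d - d')`. Hence `x^c ↦ [x^(c-d) e_d]`, for any `d ≤ c` of degree `k`, is a well-defined
`R`-linear map `S → S^(D_k) / im g` whose composite with `f` is the quotient map, so
`ker f ⊆ im g`. -/

/-- Exponent vectors `d : Fin (n+1) →₀ ℕ` of total degree `k`, indexing the monic monomials
`x^d` of degree `k` in `n+1` variables. -/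
def ExpVec (n k : ℕ) : Type :=
  {d : Fin (n + 1) →₀ ℕ // d.sum (fun _ v => v) = k}

/-- Adding `1` to the `i`-th entry of an exponent vector of degree `k` gives one of degree
`k + 1` (multiplication of the monomial `x^q` by `x_i`). -/
noncomputable def ExpVec.addVar {n k : ℕ} (q : ExpVec n k) (i : Fin (n + 1)) : ExpVec n (k + 1) :=
  ⟨q.1 + Finsupp.single i 1, by
    rw [Finsupp.sum_add_index' (fun _ => rfl) (fun _ _ _ => rfl), q.2,
      Finsupp.sum_single_index rfl]⟩

open MvPolynomial Finsupp

namespace ExpVec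

variable {n k : ℕ}

lemma degree_eq (d : ExpVec n k) : d.1.degree = k := d.2

@[simp]
lemma val_addVar (q : ExpVec n k) (i : Fin (n + 1)) : (q.addVar i).1 = q.1 + single i 1 := rfl

lemma eq_of_le {d d' : ExpVec n k} (h : d.1 ≤ d'.1) : d = d' := by
  have hsum : ∑ i, d.1 i = ∑ i, d'.1 i := by
    rw [← degree_eq_sum, ← degree_eq_sum, d.degree_eq, d'.degree_eq]
  exact Subtype.ext <| Finsupp.ext fun i =>
    (Finset.sum_eq_sum_iff_of_le fun i _ => h i).mp hsum i (Finset.mem_univ i)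

lemma exists_lt_of_ne {d d' : ExpVec n k} (h : d ≠ d') : ∃ i, d'.1 i < d.1 i := by
  by_contra! hle
  exact h (eq_of_le fun i => hle i)

lemma exists_addVar_eq (d : ExpVec n (k + 1)) {j : Fin (n + 1)} (hj : 0 < d.1 j) :
    ∃ q : ExpVec n k, q.addVar j = d := by
  have hle : single j 1 ≤ d.1 := single_le_iff.mpr hj
  have hdeg := congrArg degree (tsub_add_cancel_of_le hle)
  rw [map_add, degree_single, d.degree_eq] at hdeg
  exact ⟨⟨d.1 - single j 1, show degree _ = k by omega⟩, Subtype.ext (tsub_add_cancel_of_le hle)⟩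

end ExpVec

section

variable (R : Type*) [CommRing R] (n m : ℕ)

local notation "S" => MvPolynomial (Fin (n + 1)) R

noncomputable def monomialMap : (ExpVec n (m + 1) →₀ S) →ₗ[S] S :=
  linearCombination _ fun d => monomial d.1 1

noncomputable def linearSyzygyMap :
    ((ExpVec n m × {p : Fin (n + 1) × Fin (n + 1) // p.1 < p.2}) →₀ S)
      →ₗ[S] (ExpVec n (m + 1) →₀ S) :=
  linearCombination _ fun qij =>
    (X qij.2.1.1 : S) • single (qij.1.addVar qij.2.1.2) 1
      - (X qij.2.1.2 : S) • single (qij.1.addVar qij.2.1.1) 1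

lemma range_monomialMap :
    LinearMap.range (monomialMap R n m) =
      Ideal.span {x | ∃ d : ExpVec n (m + 1), x = monomial d.1 1} := by
  rw [monomialMap, range_linearCombination]
  congr 1
  ext x
  simp [eq_comm]

lemma monomialMap_comp_linearSyzygyMap :
    monomialMap R n m ∘ₗ linearSyzygyMap R n m = 0 := by
  ext ⟨q, ⟨⟨i, j⟩, _⟩⟩ : 2
  simp only [monomialMap, linearSyzygyMap, LinearMap.comp_apply, lsingle_apply,
    linearCombination_single, one_smul, map_sub, map_smul, smul_eq_mul, LinearMap.zero_apply,
    ExpVec.val_addVar, monomial_add_single, pow_one]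
  ring

lemma monomial_smul_single_addVar_sub_mem_range (c : Fin (n + 1) →₀ ℕ) (q : ExpVec n m)
    (i j : Fin (n + 1)) :
    (monomial (c + single i 1) 1 : S) • single (q.addVar j) 1
      - (monomial (c + single j 1) 1 : S) • single (q.addVar i) 1
      ∈ LinearMap.range (linearSyzygyMap R n m) := by
  wlog hij : i < j generalizing i j
  · rcases (not_lt.mp hij).eq_or_lt with rfl | hji
    · simp
    · simpa using neg_mem (this j i hji)
  have := Submodule.smul_mem _ (monomial c 1)
    (LinearMap.mem_range_self (linearSyzygyMap R n m) (single (q, ⟨(i, j), hij⟩) 1))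
  simpa [linearSyzygyMap, smul_sub, smul_smul, monomial_add_single] using this

lemma monomial_smul_single_sub_mem_range {a b : Fin (n + 1) →₀ ℕ} {d d' : ExpVec n (m + 1)}
    (h : a + d.1 = b + d'.1) :
    (monomial a 1 : S) • single d 1 - (monomial b 1 : S) • single d' 1
      ∈ LinearMap.range (linearSyzygyMap R n m) := by
  induction hdist : ∑ x, (d.1 x - d'.1 x) using Nat.strong_induction_on generalizing b d' with
  | _ t ih =>
  by_cases hdd : d = d'
  · subst hdd
    rw [add_right_cancel h, sub_self]
    exact zero_mem _
  obtain ⟨i, hi⟩ := ExpVec.exists_lt_of_ne hdd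
  obtain ⟨j, hj⟩ := ExpVec.exists_lt_of_ne (Ne.symm hdd)
  obtain ⟨q, rfl⟩ := d'.exists_addVar_eq (j := j) (by omega)
  have hij : i ≠ j := by rintro rfl; omega
  have hbi := congrArg (· i) h
  obtain ⟨c, rfl⟩ : ∃ c, b = c + single i 1 :=
    ⟨b - single i 1, (tsub_add_cancel_of_le (single_le_iff.mpr (by simp at hbi hi; omega))).symm⟩
  have h_move := monomial_smul_single_addVar_sub_mem_range R n m c q i j
  have h_closer : ∑ x, (d.1 x - (q.addVar i).1 x) < t := by
    rw [← hdist]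
    refine Finset.sum_lt_sum (fun x _ => ?_) ⟨i, Finset.mem_univ i, ?_⟩
    · simp only [ExpVec.val_addVar, Finsupp.add_apply, single_apply, ↓reduceIte] at hj ⊢
      split_ifs <;> subst_vars <;> omega
    · simp [hij] at hi ⊢
      omega
  have h_ih := ih _ h_closer (b := c + single j 1)
    (by rw [h]; simp only [ExpVec.val_addVar]; abel) rfl
  simpa using sub_mem h_ih h_move

lemma exists_comp_monomialMap_eq_mkQ :
    ∃ Θ : S →ₗ[R] (ExpVec n (m + 1) →₀ S) ⧸ LinearMap.range (linearSyzygyMap R n m),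
      Θ ∘ₗ (monomialMap R n m).restrictScalars R =
        (LinearMap.range (linearSyzygyMap R n m)).mkQ.restrictScalars R := by
  classical
  set N := LinearMap.range (linearSyzygyMap R n m)
  let w : (Fin (n + 1) →₀ ℕ) → _ ⧸ N := fun c =>
    if h : ∃ d : ExpVec n (m + 1), d.1 ≤ c then
      N.mkQ ((monomial (c - h.choose.1) 1 : S) • single h.choose 1) else 0
  have hw : ∀ a (d : ExpVec n (m + 1)),
      w (a + d.1) = N.mkQ ((monomial a 1 : S) • single d 1) := by
    intro a d
    have h : ∃ d' : ExpVec n (m + 1), d'.1 ≤ a + d.1 := ⟨d, le_add_self⟩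
    simp only [w, dif_pos h]
    exact (Submodule.Quotient.eq N).mpr
      (monomial_smul_single_sub_mem_range R n m (tsub_add_cancel_of_le h.choose_spec))
  refine ⟨(basisMonomials _ R).constr R w, Finsupp.lhom_ext fun d p => ?_⟩
  induction p using MvPolynomial.induction_on' with
  | monomial a r =>
    have hsingle : single d (monomial a r) = r • (monomial a 1 : S) • single d 1 := by
      rw [smul_single, smul_single, smul_eq_mul, mul_one, smul_monomial, smul_eq_mul, mul_one]
    have hf : monomialMap R n m ((monomial a 1 : S) • single d 1) =
        basisMonomials (Fin (n + 1)) R (a + d.1) := by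
      simp [monomialMap, monomial_mul]
    simp only [LinearMap.comp_apply, LinearMap.restrictScalars_apply, hsingle,
      LinearMap.map_smul_of_tower, hf, Module.Basis.constr_basis, hw]
  | add p q hp hq => simp only [single_add, map_add, hp, hq]

lemma ker_monomialMap :
    LinearMap.ker (monomialMap R n m) = LinearMap.range (linearSyzygyMap R n m) := by
  refine le_antisymm (fun v hv => ?_)
    (LinearMap.range_le_ker_iff.mpr (monomialMap_comp_linearSyzygyMap R n m))
  obtain ⟨Θ, hΘ⟩ := exists_comp_monomialMap_eq_mkQ R n m
  have hv' := LinearMap.congr_fun hΘ v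
  rw [LinearMap.comp_apply, LinearMap.restrictScalars_apply, LinearMap.mem_ker.mp hv,
    map_zero] at hv'
  exact (Submodule.Quotient.mk_eq_zero _).mp hv'.symm

end

/-- Let `S = R[x₀,…,xₙ]` and `k = m + 1 ≥ 1`. Let `f : S^{D_k} → S`, `e_d ↦ x^d` and
`g : S^{D_{k-1} × {(i,j) : i < j}} → S^{D_k}`, `e_{q,i,j} ↦ x_i • e_{q+δ_j} - x_j • e_{q+δ_i}`.
Then the image of `f` is the ideal generated by the monomials of degree `k` and
`ker f = im g`. -/
theorem stmt_7 (R : Type*) [CommRing R] (n m : ℕ)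
    (f : (ExpVec n (m + 1) →₀ MvPolynomial (Fin (n + 1)) R)
        →ₗ[MvPolynomial (Fin (n + 1)) R] MvPolynomial (Fin (n + 1)) R)
    (g : ((ExpVec n m × {p : Fin (n + 1) × Fin (n + 1) // p.1 < p.2})
          →₀ MvPolynomial (Fin (n + 1)) R)
        →ₗ[MvPolynomial (Fin (n + 1)) R] (ExpVec n (m + 1) →₀ MvPolynomial (Fin (n + 1)) R))
    (hf : ∀ d : ExpVec n (m + 1), f (Finsupp.single d 1) = MvPolynomial.monomial d.1 1)
    (hg : ∀ (q : ExpVec n m) (ij : {p : Fin (n + 1) × Fin (n + 1) // p.1 < p.2}),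
      g (Finsupp.single (q, ij) 1) =
        (MvPolynomial.X ij.1.1 : MvPolynomial (Fin (n + 1)) R) • Finsupp.single (q.addVar ij.1.2) (1 : MvPolynomial (Fin (n + 1)) R)
          - (MvPolynomial.X ij.1.2 : MvPolynomial (Fin (n + 1)) R) • Finsupp.single (q.addVar ij.1.1) (1 : MvPolynomial (Fin (n + 1)) R)) :
    LinearMap.range f =
        Ideal.span {x : MvPolynomial (Fin (n + 1)) R |
          ∃ d : ExpVec n (m + 1), x = MvPolynomial.monomial d.1 1} ∧
      LinearMap.ker f = LinearMap.range g := by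
  obtain rfl : f = monomialMap R n m :=
    Finsupp.basisSingleOne.ext fun d => by simp [hf, monomialMap]
  obtain rfl : g = linearSyzygyMap R n m :=
    Finsupp.basisSingleOne.ext fun qij => by simp [hg, linearSyzygyMap]
  exact ⟨range_monomialMap R n m, ker_monomialMap R n m⟩
end

section
/- Let R be a commutative ring, n ≥ 0, and let s₀,…,sₙ ∈ R generate the unit ideal. Fix m ≥ 1 and let D_m denote the set of exponent vectors d : {0,…,n} → ℕ with Σ_i d(i) = m. Consider the R-linear map f : R^(D_m) → R defined on basis vectors by f(e_d) = Π_i s_i^{d(i)}, and the R-linear map g : R^(D_{m−1} × {(i,j) : 0 ≤ i < j ≤ n}) → R^(D_m) defined by g(e_{q,i,j}) = s_i · e_{q+δ_j} − s_j · e_{q+δ_i}, where δ_i is the i-th standard exponent vector. Then f is surjective and the kernel of f equals the image of g. -/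
/-!
Let `N = im g` and write `s^d = ∏ i, s i ^ d i`. Modulo `N` the basis vectors satisfy
`s i • e (q + δ j) = s j • e (q + δ i)`; iterating these exchanges gives
`s i ^ (m + 1) • e d ≡ s^d • e ((m + 1) δ i)`. The powers `s i ^ (m + 1)` still generate the unit
ideal, say `∑ c i * s i ^ (m + 1) = 1`, so with `z = ∑ c i • e ((m + 1) δ i)` every basis vector
satisfies `e d ≡ s^d • z = f (e d) • z`, hence `x ≡ f x • z` for all `x`. As `f z = 1`, this gives
surjectivity and `ker f ⊆ N`; the reverse inclusion is
`f (g e_{q,i,j}) = s i s^q s j - s j s^q s i = 0`.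
-/

open Finsupp

section Exchange

variable {σ R M : Type*} [CommSemiring R] [AddCommMonoid M] [Module R M] (s : σ → R)
  (E : (σ →₀ ℕ) → M) (i : σ)

theorem prod_pow_single (k : ℕ) : (single i k).prod (fun j k => s j ^ k) = s i ^ k :=
  prod_single_index (pow_zero _)

theorem prod_pow_add (p q : σ →₀ ℕ) :
    (p + q).prod (fun j k => s j ^ k) = p.prod (fun j k => s j ^ k) * q.prod fun j k => s j ^ k :=
  prod_add_index' (fun _ => pow_zero _) (fun _ _ _ => pow_add _ _ _)

/-- Closure under addition reduces the exchange lemma below to the generators `single a 1`. -/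
def exchangeSubmonoid : AddSubmonoid (σ →₀ ℕ) where
  carrier := {q | ∀ p, s i ^ q.degree • E (p + q) =
    (q.prod fun j k => s j ^ k) • E (p + single i q.degree)}
  zero_mem' := by simp
  add_mem' := by
    intro f g hf hg p
    calc s i ^ (f + g).degree • E (p + (f + g))
        = s i ^ g.degree • s i ^ f.degree • E (p + g + f) := by
          rw [map_add, pow_add, mul_comm, mul_smul, add_comm f, add_assoc]
      _ = (f.prod fun j k => s j ^ k) • s i ^ g.degree • E (p + single i f.degree + g) := by
          rw [hf, smul_comm, add_right_comm]
      _ = ((f + g).prod fun j k => s j ^ k) • E (p + single i (f + g).degree) := by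
          rw [hg, smul_smul, prod_pow_add, map_add, single_add, add_assoc]

theorem pow_degree_smul_eq_prod_smul
    (hE : ∀ p j k, s j • E (p + single k 1) = s k • E (p + single j 1)) (q : σ →₀ ℕ) :
    s i ^ q.degree • E q = (q.prod fun j k => s j ^ k) • E (single i q.degree) := by
  have hq : q ∈ exchangeSubmonoid s E i := by
    induction q using Finsupp.induction_linear with
    | zero => exact zero_mem _
    | add f g hf hg => exact add_mem hf hg
    | single a k =>
      rw [← smul_single_one]
      refine nsmul_mem (fun p => ?_) k
      simpa [prod_pow_single] using hE p i a
  simpa using hq 0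

theorem eq_prod_smul_sum_of_exchange [Fintype σ]
    (hE : ∀ p j k, s j • E (p + single k 1) = s k • E (p + single j 1)) (d : σ →₀ ℕ)
    {c : σ → R} (hc : ∑ i, c i * s i ^ d.degree = 1) :
    E d = (d.prod fun j k => s j ^ k) • ∑ i, c i • E (single i d.degree) := by
  calc
    E d = ∑ i, c i • s i ^ d.degree • E d := by
      simp_rw [smul_smul, ← Finset.sum_smul, hc, one_smul]
    _ = ∑ i, c i • (d.prod fun j k => s j ^ k) • E (single i d.degree) := by
      simp_rw [pow_degree_smul_eq_prod_smul s E _ hE]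
    _ = _ := by simp_rw [Finset.smul_sum, smul_comm (c _)]

end Exchange

namespace ExpVec

variable (R : Type*) [Semiring R] {n : ℕ}

/-- The basis vector `e_d`, extended by `0` to exponent vectors `d` of the wrong degree, so that
the exchange relations hold for every `p` without degree side conditions. -/
noncomputable def basisVec (m : ℕ) (d : Fin (n + 1) →₀ ℕ) : ExpVec n m →₀ R :=
  if h : d.degree = m then single ⟨d, h⟩ 1 else 0

theorem basisVec_val {m : ℕ} (d : ExpVec n m) : basisVec R m d.1 = single d 1 := dif_pos d.2

theorem basisVec_of_degree_eq {m : ℕ} {d : Fin (n + 1) →₀ ℕ} (h : d.degree = m) :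
    basisVec R m d = single ⟨d, h⟩ 1 := dif_pos h

theorem basisVec_of_degree_ne {m : ℕ} {d : Fin (n + 1) →₀ ℕ} (h : d.degree ≠ m) :
    basisVec R m d = 0 := dif_neg h

end ExpVec

open ExpVec

section Koszul

variable {R : Type*} [CommRing R] {n m : ℕ} (s : Fin (n + 1) → R)
  {f : (ExpVec n (m + 1) →₀ R) →ₗ[R] R}
  {g : ((ExpVec n m × {p : Fin (n + 1) × Fin (n + 1) // p.1 < p.2}) →₀ R)
    →ₗ[R] (ExpVec n (m + 1) →₀ R)}
  (hf : ∀ d : ExpVec n (m + 1), f (single d 1) = d.1.prod fun i k => s i ^ k)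
  (hg : ∀ (q : ExpVec n m) (ij : {p : Fin (n + 1) × Fin (n + 1) // p.1 < p.2}),
    g (Finsupp.single (q, ij) 1) =
      s ij.1.1 • Finsupp.single (q.addVar ij.1.2) (1 : R)
        - s ij.1.2 • Finsupp.single (q.addVar ij.1.1) (1 : R))

include hf in
theorem apply_basisVec {d : Fin (n + 1) →₀ ℕ} (hd : d.degree = m + 1) :
    f (basisVec R (m + 1) d) = d.prod fun i k => s i ^ k := by
  rw [basisVec_of_degree_eq R hd]
  exact hf _

include hg in
theorem smul_basisVec_sub_mem_range (p : Fin (n + 1) →₀ ℕ) (i j : Fin (n + 1)) :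
    s i • basisVec R (m + 1) (p + single j 1) - s j • basisVec R (m + 1) (p + single i 1)
      ∈ LinearMap.range g := by
  by_cases hp : p.degree = m
  · have hlt : ∀ i j (hij : i < j), s i • basisVec R (m + 1) (p + single j 1)
        - s j • basisVec R (m + 1) (p + single i 1) ∈ LinearMap.range g := fun i j hij =>
      ⟨single (⟨p, hp⟩, ⟨(i, j), hij⟩) 1, (hg _ _).trans (by
        rw [← basisVec_val, ← basisVec_val]; rfl)⟩
    rcases lt_trichotomy i j with h | rfl | h
    · exact hlt i j h
    · simp
    · rw [← neg_sub]; exact neg_mem (hlt j i h)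
  · have hzero : ∀ k, basisVec R (m + 1) (p + single k 1) = 0 := fun k =>
      basisVec_of_degree_ne R (by simpa using hp)
    simp [hzero]

include hg in
theorem smul_mkQ_basisVec_comm (p : Fin (n + 1) →₀ ℕ) (i j : Fin (n + 1)) :
    s i • (LinearMap.range g).mkQ (basisVec R (m + 1) (p + single j 1)) =
      s j • (LinearMap.range g).mkQ (basisVec R (m + 1) (p + single i 1)) := by
  rw [← map_smul, ← map_smul, Submodule.mkQ_apply, Submodule.mkQ_apply, Submodule.Quotient.eq]
  exact smul_basisVec_sub_mem_range s hg p i j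

include hf hg in
theorem range_le_ker : LinearMap.range g ≤ LinearMap.ker f := by
  refine LinearMap.range_le_ker_iff.mpr (Finsupp.lhom_ext' fun ⟨q, ⟨(i, j), _⟩⟩ => ?_)
  ext
  simp only [LinearMap.comp_apply, lsingle_apply, hg, map_sub, map_smul, hf, smul_eq_mul,
    LinearMap.zero_apply]
  change s i * (q.1 + single j 1).prod _ - s j * (q.1 + single i 1).prod _ = 0
  rw [prod_pow_add, prod_pow_add, prod_pow_single, prod_pow_single, pow_one, pow_one]
  ring

end Koszul

/-- Let `R` be a commutative ring and `s₀,…,sₙ ∈ R` generate the unit ideal. Fix `m + 1 ≥ 1`.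
Let `f : R^{D_{m+1}} → R`, `e_d ↦ Π_i s_i^{d i}` and
`g : R^{D_m × {(i,j) : i < j}} → R^{D_{m+1}}`, `e_{q,i,j} ↦ s_i • e_{q+δ_j} - s_j • e_{q+δ_i}`.
Then `f` is surjective and `ker f = im g`. -/
theorem stmt_8 (R : Type*) [CommRing R] (n : ℕ) (s : Fin (n + 1) → R)
    (hs : Ideal.span (Set.range s) = ⊤) (m : ℕ)
    (f : (ExpVec n (m + 1) →₀ R) →ₗ[R] R)
    (g : ((ExpVec n m × {p : Fin (n + 1) × Fin (n + 1) // p.1 < p.2}) →₀ R)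
        →ₗ[R] (ExpVec n (m + 1) →₀ R))
    (hf : ∀ d : ExpVec n (m + 1), f (Finsupp.single d 1) = ∏ i, s i ^ d.1 i)
    (hg : ∀ (q : ExpVec n m) (ij : {p : Fin (n + 1) × Fin (n + 1) // p.1 < p.2}),
      g (Finsupp.single (q, ij) 1) =
        s ij.1.1 • Finsupp.single (q.addVar ij.1.2) (1 : R)
          - s ij.1.2 • Finsupp.single (q.addVar ij.1.1) (1 : R)) :
    Function.Surjective f ∧ LinearMap.ker f = LinearMap.range g := by
  replace hf : ∀ d : ExpVec n (m + 1), f (single d 1) = d.1.prod fun i k => s i ^ k := by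
    simpa only [prod_pow] using hf
  obtain ⟨c, hc⟩ : ∃ c : Fin (n + 1) → R, ∑ i, c i * s i ^ (m + 1) = 1 := by
    rw [← Ideal.mem_span_range_iff_exists_fun, Set.range_comp' (· ^ (m + 1)) s,
      Ideal.span_pow_eq_top _ hs]
    trivial
  set N := LinearMap.range g
  set z := ∑ i, c i • basisVec R (m + 1) (single i (m + 1))
  have hfz : f z = 1 := by
    simp only [z, map_sum, map_smul, apply_basisVec s hf (degree_single _ _), smul_eq_mul,
      prod_pow_single, hc]
  have hmkQ : N.mkQ = f.smulRight (N.mkQ z) := by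
    ext d
    have hd : d.1.degree = m + 1 := d.2
    have := eq_prod_smul_sum_of_exchange s (fun d => N.mkQ (basisVec R (m + 1) d))
      (smul_mkQ_basisVec_comm s hg) d.1 (c := c) (by rwa [hd])
    simpa [basisVec_val, hd, hf, z, map_sum] using this
  refine ⟨fun r => ⟨r • z, by rw [map_smul, hfz, smul_eq_mul, mul_one]⟩,
    le_antisymm (fun x hx => ?_) (range_le_ker s hf hg)⟩
  have h := LinearMap.congr_fun hmkQ x
  rwa [LinearMap.smulRight_apply, LinearMap.mem_ker.mp hx, zero_smul, Submodule.mkQ_apply,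
    Submodule.Quotient.mk_eq_zero] at h
end

section
/- Let C be a symmetric monoidal category, let L, L' be objects of C, and let c : L' ⊗ L ≅ 1 be an isomorphism (where 1 is the monoidal unit). Then there exists a unique morphism e : 1 → L ⊗ L' such that c and e satisfy the triangle (zigzag) identities exhibiting L' as a dual of L with counit c and unit e, namely: the composite L ≅ 1 ⊗ L → (L ⊗ L') ⊗ L ≅ L ⊗ (L' ⊗ L) → L ⊗ 1 ≅ L (using e and c) is the identity of L, and the composite L' ≅ L' ⊗ 1 → L' ⊗ (L ⊗ L') ≅ (L' ⊗ L) ⊗ L' → 1 ⊗ L' ≅ L' is the identity of L'. Moreover this unique e is an isomorphism. -/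
open CategoryTheory CategoryTheory.MonoidalCategory

section Aux
variable {C : Type*} [Category C] [MonoidalCategory C]

private theorem stmt9_exchange (L L' : C) (c : L' ⊗ L ≅ 𝟙_ C) (η₁ η₂ : 𝟙_ C ⟶ L ⊗ L') :
    η₂ ≫ L ◁ ((ρ_ L').inv ≫ L' ◁ η₁ ≫ (α_ L' L L').inv ≫ c.hom ▷ L' ≫ (λ_ L').hom)
      = η₁ ≫ ((λ_ L).inv ≫ η₂ ▷ L ≫ (α_ L L' L).hom ≫ L ◁ c.hom ≫ (ρ_ L).hom) ▷ L' := by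
  simp only [MonoidalCategory.whiskerLeft_comp, comp_whiskerRight, Category.assoc,
    whiskerLeft_rightUnitor_inv]
  rw [← associator_naturality_right_assoc, rightUnitor_inv_naturality_assoc,
    ← whisker_exchange_assoc]
  simp only [id_whiskerLeft, Category.assoc]
  rw [whiskerRight_tensor_symm_assoc η₂ L L']
  monoidal

private theorem stmt9_cancel (L L' : C) (c : L' ⊗ L ≅ 𝟙_ C) (w : L' ⟶ L')
    (h : L ◁ w = 𝟙 (L ⊗ L')) : w = 𝟙 L' := by
  have h2 : (L' ⊗ L) ◁ w = 𝟙 _ := by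
    rw [tensor_whiskerLeft, h]; simp
  have h3 := whisker_exchange c.hom w
  rw [h2, Category.id_comp] at h3
  have h4 : 𝟙_ C ◁ w = 𝟙_ C ◁ 𝟙 L' := by
    rw [← cancel_epi (c.hom ▷ L'), ← h3]; simp
  exact (whiskerLeft_iff _ _).mp h4

private theorem stmt9_shift (L L' : C) (c : L' ⊗ L ≅ 𝟙_ C) (e₀ : 𝟙_ C ⟶ L ⊗ L') (v : L ⟶ L) :
    (λ_ L).inv ≫ (e₀ ≫ v ▷ L') ▷ L ≫ (α_ L L' L).hom ≫ L ◁ c.hom ≫ (ρ_ L).hom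
      = ((λ_ L).inv ≫ e₀ ▷ L ≫ (α_ L L' L).hom ≫ L ◁ c.hom ≫ (ρ_ L).hom) ≫ v := by
  simp only [comp_whiskerRight, Category.assoc]
  rw [associator_naturality_left_assoc, ← whisker_exchange_assoc]
  simp

end Aux

/-- In a symmetric monoidal category, given an isomorphism `c : L' ⊗ L ≅ 𝟙_C`, there is a unique
morphism `e : 𝟙_C ⟶ L ⊗ L'` satisfying the two triangle (zigzag) identities exhibiting `L'` as a
dual of `L` with counit `c.hom` and unit `e`; moreover this unique `e` is an isomorphism. -/
theorem stmt_9 (C : Type*) [Category C] [MonoidalCategory C] [SymmetricCategory C]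
    (L L' : C) (c : L' ⊗ L ≅ 𝟙_ C) :
    (∃! e : 𝟙_ C ⟶ L ⊗ L',
        (λ_ L).inv ≫ e ▷ L ≫ (α_ L L' L).hom ≫ L ◁ c.hom ≫ (ρ_ L).hom = 𝟙 L ∧
          (ρ_ L').inv ≫ L' ◁ e ≫ (α_ L' L L').inv ≫ c.hom ▷ L' ≫ (λ_ L').hom = 𝟙 L') ∧
      ∀ e : 𝟙_ C ⟶ L ⊗ L',
        ((λ_ L).inv ≫ e ▷ L ≫ (α_ L L' L).hom ≫ L ◁ c.hom ≫ (ρ_ L).hom = 𝟙 L ∧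
          (ρ_ L').inv ≫ L' ◁ e ≫ (α_ L' L L').inv ≫ c.hom ▷ L' ≫ (λ_ L').hom = 𝟙 L') →
        IsIso e := by
  -- the candidate unit, to be corrected
  set e₀ : 𝟙_ C ⟶ L ⊗ L' := c.inv ≫ (β_ L' L).hom with he₀
  set u : L ⟶ L := (λ_ L).inv ≫ e₀ ▷ L ≫ (α_ L L' L).hom ≫ L ◁ c.hom ≫ (ρ_ L).hom with hu
  have hiso : IsIso u := by rw [hu]; infer_instance
  set e : 𝟙_ C ⟶ L ⊗ L' := e₀ ≫ inv u ▷ L' with he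
  have hz1 : (λ_ L).inv ≫ e ▷ L ≫ (α_ L L' L).hom ≫ L ◁ c.hom ≫ (ρ_ L).hom = 𝟙 L := by
    rw [he, stmt9_shift L L' c e₀ (inv u), ← hu, IsIso.hom_inv_id]
  have hie : IsIso e := by rw [he]; infer_instance
  have hz2 : (ρ_ L').inv ≫ L' ◁ e ≫ (α_ L' L L').inv ≫ c.hom ▷ L' ≫ (λ_ L').hom = 𝟙 L' := by
    have h := stmt9_exchange L L' c e e
    rw [hz1] at h
    simp only [id_whiskerRight, Category.comp_id] at h
    exact stmt9_cancel L L' c _ ((cancel_epi e).mp (by simpa using h))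
  -- uniqueness
  have huniq : ∀ y : 𝟙_ C ⟶ L ⊗ L',
      ((λ_ L).inv ≫ y ▷ L ≫ (α_ L L' L).hom ≫ L ◁ c.hom ≫ (ρ_ L).hom = 𝟙 L ∧
        (ρ_ L').inv ≫ L' ◁ y ≫ (α_ L' L L').inv ≫ c.hom ▷ L' ≫ (λ_ L').hom = 𝟙 L') → y = e := by
    intro y hy
    have h := stmt9_exchange L L' c y e
    rw [hy.2, hz1] at h
    simpa using h.symm
  refine ⟨⟨e, ⟨hz1, hz2⟩, huniq⟩, ?_⟩
  intro y hy
  rw [huniq y hy]; exact hie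
end

section
/- Let C be a symmetric monoidal category with braiding β, and let L, L' be objects of C such that there is an isomorphism L' ⊗ L ≅ 1. If the braiding β_{L,L} : L ⊗ L → L ⊗ L equals the identity, then the braiding β_{L',L'} : L' ⊗ L' → L' ⊗ L' also equals the identity. -/
open CategoryTheory CategoryTheory.MonoidalCategory

/-!
Tensoring with an invertible object is faithful, so it suffices to show that
`β_{L',L'} ⊗ 𝟙_{L ⊗ L} = 𝟙`. In a symmetric category the self-braiding of `L' ⊗ L` is
`β_{L',L'} ⊗ β_{L,L}` up to conjugation by the middle interchange `tensorμ`, and it is the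
identity because `L' ⊗ L ≅ 𝟙` and the self-braiding of the unit is the identity.
-/

namespace CategoryTheory.MonoidalCategory

variable {C : Type*} [Category C] [MonoidalCategory C]

theorem whiskerRight_injective_of_tensor_iso_tensorUnit {X Y Z W : C} (e : Z ⊗ W ≅ 𝟙_ C) :
    Function.Injective (fun f : X ⟶ Y => f ▷ Z) := by
  intro f g hfg
  have hZW : f ▷ (Z ⊗ W) = g ▷ (Z ⊗ W) := by
    simp only [whiskerRight_tensor, show f ▷ Z = g ▷ Z from hfg]
  have hUnit : f ▷ 𝟙_ C = g ▷ 𝟙_ C := by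
    rw [← cancel_epi (X ◁ e.hom), whisker_exchange, whisker_exchange, hZW]
  simpa only [whiskerRight_id, cancel_epi, cancel_mono] using hUnit

theorem braiding_self_eq_id_of_iso_tensorUnit [BraidedCategory C] {X : C} (e : X ≅ 𝟙_ C) :
    (β_ X X).hom = 𝟙 (X ⊗ X) := by
  have hUnit : (β_ (𝟙_ C) (𝟙_ C)).hom = 𝟙 _ := by
    rw [braiding_tensorUnit_left, unitors_equal, Iso.hom_inv_id]
  rw [← cancel_mono (e.hom ⊗ₘ e.hom), ← BraidedCategory.braiding_naturality, hUnit,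
    Category.comp_id, Category.id_comp]

theorem SymmetricCategory.braiding_tensorHom_braiding_eq_id [SymmetricCategory C] {X Y : C}
    (h : (β_ (X ⊗ Y) (X ⊗ Y)).hom = 𝟙 _) : (β_ X X).hom ⊗ₘ (β_ Y Y).hom = 𝟙 _ := by
  have swap := SymmetricCategory.tensorμ_braid_swap X Y
  rw [h, Category.comp_id] at swap
  calc (β_ X X).hom ⊗ₘ (β_ Y Y).hom
      = ((β_ X X).hom ⊗ₘ (β_ Y Y).hom) ≫ tensorμ X X Y Y ≫ tensorδ X X Y Y := by
        rw [tensorμ_tensorδ, Category.comp_id]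
    _ = 𝟙 _ := by rw [← Category.assoc, ← swap, tensorμ_tensorδ]

end CategoryTheory.MonoidalCategory

/-- In a symmetric monoidal category, if `L' ⊗ L ≅ 𝟙_C` and the braiding `β_{L,L}` is the
identity, then the braiding `β_{L',L'}` is also the identity. -/
theorem stmt_10 (C : Type*) [Category C] [MonoidalCategory C] [SymmetricCategory C]
    (L L' : C) (c : L' ⊗ L ≅ 𝟙_ C)
    (h : (β_ L L).hom = 𝟙 (L ⊗ L)) : (β_ L' L').hom = 𝟙 (L' ⊗ L') := by
  have hL'L : (β_ L' L').hom ⊗ₘ 𝟙 (L ⊗ L) = 𝟙 _ := by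
    simpa only [h] using SymmetricCategory.braiding_tensorHom_braiding_eq_id
      (braiding_self_eq_id_of_iso_tensorUnit c)
  let d : L ⊗ L' ≅ 𝟙_ C := β_ L L' ≪≫ c
  let e : (L ⊗ L) ⊗ (L' ⊗ L') ≅ 𝟙_ C :=
    ⟨tensorμ L L L' L', tensorδ L L L' L', tensorμ_tensorδ .., tensorδ_tensorμ ..⟩ ≪≫
      (d ⊗ᵢ d) ≪≫ λ_ (𝟙_ C)
  apply whiskerRight_injective_of_tensor_iso_tensorUnit e
  simpa only [tensorHom_id, id_whiskerRight] using hL'L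
end

section
/- Let R be a nontrivial commutative ring, and consider the full subcategory C of the category of R[X]-modules consisting of those modules on which multiplication by X acts injectively. The polynomial ring R[X] itself is an object of C, and the R[X]-linear endomorphism of R[X] given by multiplication by X is an epimorphism in C but not an isomorphism. -/
/-!
Multiplication by `X` is epi in the subcategory because `X` can be cancelled on the target:
if `g₁ (X • m) = g₂ (X • m)` then `X • g₁ m = X • g₂ m`, hence `g₁ m = g₂ m` by injectivity of
`X` on the target. It is not an isomorphism because `1` is not in its image, `X` not being a unit.
-/

open CategoryTheory

/-- The property of an `R[X]`-module that multiplication by `X` acts injectively on it. -/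
def XRegularAction (R : Type*) [CommRing R] : ModuleCat (Polynomial R) → Prop :=
  fun M => Function.Injective fun x : M => (Polynomial.X : Polynomial R) • x

open Polynomial

section

variable {A : Type*} [CommRing A]

theorem CategoryTheory.ObjectProperty.epi_homMk_ofHom_lsmul (a : A)
    {P : ObjectProperty (ModuleCat A)}
    (hP : ∀ M, P M → Function.Injective fun x : M => a • x)
    (M : Type*) [AddCommGroup M] [Module A M] (hM : P (ModuleCat.of A M)) :
    Epi (ObjectProperty.homMk (ModuleCat.ofHom (LinearMap.lsmul A M a)) :
      (⟨_, hM⟩ : P.FullSubcategory) ⟶ ⟨_, hM⟩) := by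
  refine ⟨fun {N} g₁ g₂ hg => ?_⟩
  ext m
  apply hP N.obj N.property
  simp only [← map_smul]
  exact congrArg (fun f => f.hom.hom m) hg

theorem ModuleCat.isUnit_of_isIso_ofHom_lsmul {a : A}
    (h : IsIso (ModuleCat.ofHom (LinearMap.lsmul A A a))) : IsUnit a := by
  obtain ⟨b, hb⟩ := ((ConcreteCategory.isIso_iff_bijective _).mp h).surjective 1
  exact IsUnit.of_mul_eq_one b hb

end

theorem xRegularAction_self (R : Type*) [CommRing R] :
    XRegularAction R (ModuleCat.of R[X] R[X]) :=
  isRegular_X.left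

/-- For a nontrivial commutative ring `R`, in the full subcategory of `R[X]`-modules on which `X`
acts injectively, `R[X]` itself is an object, and multiplication by `X` on `R[X]` is an
epimorphism in this category which is not an isomorphism. -/
theorem stmt_13 (R : Type*) [CommRing R] [Nontrivial R] :
    ∃ h : XRegularAction R (ModuleCat.of (Polynomial R) (Polynomial R)),
      Epi (show (⟨_, h⟩ : ObjectProperty.FullSubcategory (XRegularAction R)) ⟶ ⟨_, h⟩ from
          ObjectProperty.homMk (ModuleCat.ofHom
            (LinearMap.lsmul (Polynomial R) (Polynomial R) Polynomial.X))) ∧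
        ¬ IsIso (show (⟨_, h⟩ : ObjectProperty.FullSubcategory (XRegularAction R)) ⟶ ⟨_, h⟩ from
          ObjectProperty.homMk (ModuleCat.ofHom
            (LinearMap.lsmul (Polynomial R) (Polynomial R) Polynomial.X))) := by
  refine ⟨xRegularAction_self R,
    ObjectProperty.epi_homMk_ofHom_lsmul X (fun _ hM => hM) R[X] _, fun hIso => ?_⟩
  have : IsIso (ModuleCat.ofHom (LinearMap.lsmul R[X] R[X] X)) :=
    (ObjectProperty.isIso_hom_iff _).mpr hIso
  exact not_isUnit_X (ModuleCat.isUnit_of_isIso_ofHom_lsmul this)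
end
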